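/- Let f(x) = Σ_{i≥0} a_i x^i be a power series in K⦃x⦄ (one variable) such that |f'(x)| ≥ 1 for all x in O_K. Then the SP-number of f is a (finite) integer r satisfying q_K^{r-1} ≤ ‖f − f(0)‖. Moreover, for all nonzero c ∈ M_K^r and all b ∈ O_K, one has |f_{b,c}|_SP ≥ 1, where f_{b,c}(t) := (1/c)·f(b + c·t). -/

import Mathlib

open MeasureTheory Filter
open scoped NNReal ENNReal Classical

namespace VdC

variable {K : Type*} [NontriviallyNormedField K]

/-! ### One-variable convergent power series over a non-archimedean local field -/

/-- Evaluation of a one-variable power series (given by its coefficients) at a point. -/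
noncomputable def pseval (a : ℕ → K) (x : K) : K := ∑' i, a i * x ^ i

/-- Membership in `K⦃x⦄`: the coefficients tend to `0`, i.e. convergence on `O_K`. -/
def IsConvergent (a : ℕ → K) : Prop := Tendsto (fun i => ‖a i‖) atTop (nhds 0)

/-- Gauss norm of a power series. -/
noncomputable def gaussNorm (a : ℕ → K) : ℝ := ⨆ i, ‖a i‖

/-- Coefficients of `f - f(0)`. -/
def tail (a : ℕ → K) : ℕ → K := fun i => if i = 0 then 0 else a i

/-- SP power series: `a 1 ≠ 0` and `a j ∈ a 1 • M_K` for all `j > 1`;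
`‖a 1‖` is then the SP-norm `|f|_SP`. -/
def IsSP (a : ℕ → K) : Prop := a 1 ≠ 0 ∧ ∀ j, 1 < j → ‖a j‖ < ‖a 1‖

/-- Coefficients of `f_{b,c}(t) = (1/c) ⬝ f (b + c t)`. -/
noncomputable def shiftCoeff (a : ℕ → K) (b c : K) : ℕ → K :=
  fun j => c⁻¹ * c ^ j * ∑' m : ℕ, ((m + j).choose j : K) * a (m + j) * b ^ m

/-- `SPAt q a r` says: for all nonzero `c ∈ M_K ^ r` and all `b ∈ O_K`, the power series
`f_{b,c}` is SP.  (Here `c ∈ M_K ^ r` iff `‖c‖ ≤ q⁻¹ ^ r`.)  The SP-number of `f` is the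
least `r` with this property, i.e. `IsLeast {r | SPAt q a r} r`. -/
def SPAt (q : ℕ) (a : ℕ → K) (r : ℕ) : Prop :=
  ∀ b c : K, ‖b‖ ≤ 1 → c ≠ 0 → ‖c‖ ≤ (q : ℝ)⁻¹ ^ r → IsSP (shiftCoeff a b c)

/-- Coefficients of the derivative of a power series; `dcoeff^[k] a` gives `f^{(k)}`. -/
def dcoeff (a : ℕ → K) : ℕ → K := fun j => ((j + 1 : ℕ) : K) * a (j + 1)

/-- `K` is a non-archimedean local field whose residue field has `q` elements, the norm
being normalized so that a uniformizer `π_K` has norm `q⁻¹`. -/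
structure IsLocalField (K : Type*) [NontriviallyNormedField K] (q : ℕ) : Prop where
  nonarch : IsNonarchimedean (norm : K → ℝ)
  one_lt : 1 < q
  complete : CompleteSpace K
  exists_unif : ∃ π : K, ‖π‖ = (q : ℝ)⁻¹
  discrete : ∀ x : K, x ≠ 0 → ∃ m : ℤ, ‖x‖ = (q : ℝ) ^ m
  residue : ∃ T : Finset K, T.card = q ∧ (∀ t ∈ T, ‖t‖ ≤ 1) ∧
      ∀ x : K, ‖x‖ ≤ 1 → ∃! t, t ∈ T ∧ ‖x - t‖ < 1

/-- `ψ` is an additive character on `K`, trivial on `M_K` and nontrivial on `O_K`. -/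
structure IsAddChar (ψ : K → ℂ) : Prop where
  cont : Continuous ψ
  map_add : ∀ x y, ψ (x + y) = ψ x * ψ y
  norm_eq : ∀ x, ‖ψ x‖ = 1
  triv : ∀ x : K, ‖x‖ < 1 → ψ x = 1
  nontriv : ∃ x : K, ‖x‖ ≤ 1 ∧ ψ x ≠ 1

/-- The characteristic of `K` is zero or larger than `k`. -/
def CharCond (K : Type*) [NontriviallyNormedField K] (k : ℕ) : Prop :=
  ∀ m : ℕ, m ≤ k → (m : K) = 0 → m = 0

/-- `p` is the residue characteristic of `K` (so `q = p ^ f` is the residue cardinality)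
and `e = ord (p_K)` is the ramification degree of `K`, i.e. `‖p‖ = q ^ (-e)`. -/
def IsResidueData (K : Type*) [NontriviallyNormedField K] (q p e : ℕ) : Prop :=
  p.Prime ∧ (∃ f : ℕ, 0 < f ∧ q = p ^ f) ∧ 0 < e ∧ ‖(p : K)‖ = (q : ℝ)⁻¹ ^ e

/-- `f` is (Weierstrass) regular of degree `d`: it lies in `O_K⦃x⦄` and is congruent to
a monic polynomial of degree `d` modulo `π_K ⬝ O_K⦃x⦄`. -/
def IsRegularOfDeg (a : ℕ → K) (d : ℕ) : Prop :=
  (∀ i, ‖a i‖ ≤ 1) ∧ ‖a d - 1‖ < 1 ∧ ∀ i, d < i → ‖a i‖ < 1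

/-! ### Several variables -/

/-- Evaluation of a power series in `n` variables at a point. -/
noncomputable def mpseval {n : ℕ} (a : (Fin n → ℕ) → K) (x : Fin n → K) : K :=
  ∑' i : Fin n → ℕ, a i * ∏ j, x j ^ i j

/-- Membership in `K⦃x_1,…,x_n⦄`: `‖a i‖ → 0` as `|i| → ∞`. -/
def MIsConvergent {n : ℕ} (a : (Fin n → ℕ) → K) : Prop :=
  Tendsto (fun i => ‖a i‖) cofinite (nhds 0)

/-- Gauss norm of a multivariate power series. -/
noncomputable def mgauss {n : ℕ} (a : (Fin n → ℕ) → K) : ℝ := ⨆ i, ‖a i‖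

/-- Coefficients of `f - f(0)`. -/
def mtail {n : ℕ} (a : (Fin n → ℕ) → K) : (Fin n → ℕ) → K :=
  fun i => if i = 0 then 0 else a i

/-- Coefficients of the partial derivative `∂^α f` of a multivariate power series `f`. -/
noncomputable def mpderiv {n : ℕ} (a : (Fin n → ℕ) → K) (α : Fin n → ℕ) :
    (Fin n → ℕ) → K :=
  fun i => ((∏ j, (i j + α j).descFactorial (α j) : ℕ) : K) * a (fun j => i j + α j)

/-- The unit polydisc `O_K ^ n`. -/
def polydisc (K : Type*) [NontriviallyNormedField K] (n : ℕ) : Set (Fin n → K) :=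
  {x | ∀ i, ‖x i‖ ≤ 1}

/-! ### `K`-analytic manifolds with isometric charts, type conditions, induced measures -/

/-- An isometric analytic chart of the `d`-dimensional manifold `M ⊆ K^n` centered at
`x0 ∈ M`: `ι` selects the `d` coordinates of the coordinate projection `p : x ↦ x ∘ ι`,
and the inverse of `p` is given by the `n` convergent power series `F i`, parametrizing
`M ∩ {x : ‖x - x0‖ ≤ ‖c‖}` isometrically by the polydisc `x0 + (c O_K)^d`. -/
def IsChartAt {n : ℕ} (d : ℕ) (M : Set (Fin n → K)) (x0 : Fin n → K)
    (ι : Fin d → Fin n) (c : K) (F : Fin n → (Fin d → ℕ) → K) : Prop :=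
  Function.Injective ι ∧ c ≠ 0 ∧ (∀ i, MIsConvergent (F i)) ∧
  (∀ i, mpseval (F i) 0 = x0 i) ∧
  (∀ z : Fin d → K, z ∈ polydisc K d → ∀ j, mpseval (F (ι j)) z = x0 (ι j) + c * z j) ∧
  (∀ z z' : Fin d → K, z ∈ polydisc K d → z' ∈ polydisc K d →
      ∀ i, ‖mpseval (F i) z - mpseval (F i) z'‖ ≤ ‖c‖ * (⨆ j, ‖z j - z' j‖)) ∧
  ((fun z : Fin d → K => fun i => mpseval (F i) z) '' polydisc K d
      = M ∩ {x | ∀ i, ‖x i - x0 i‖ ≤ ‖c‖})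

/-- `M ⊆ K^n` is a `d`-dimensional `K`-analytic manifold (with isometric charts). -/
def IsManifold {n : ℕ} (d : ℕ) (M : Set (Fin n → K)) : Prop :=
  ∀ x0 ∈ M, ∃ ι c F, IsChartAt d M x0 ι c F

/-- `M` is of type at most `k` at the point `x0`: for some analytic chart `f = (F i)_i`
centered at `x0` and each nonzero `v ∈ K^n` there is a multi-index `α` with
`0 < |α| ≤ k` and `v ⬝ (∂^α f)(x0) ≠ 0`. -/
def TypeAtMost {n : ℕ} (d : ℕ) (M : Set (Fin n → K)) (x0 : Fin n → K) (k : ℕ) : Prop :=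
  ∃ ι c F, IsChartAt d M x0 ι c F ∧
    ∀ v : Fin n → K, v ≠ 0 → ∃ α : Fin d → ℕ, 0 < (∑ j, α j) ∧ (∑ j, α j) ≤ k ∧
      (∑ i, v i * mpseval (mpderiv (F i) α) 0) ≠ 0

/-- `M` is of type `k`: of type at most `k` at each of its points, `k` least such. -/
def IsOfType {n : ℕ} (d : ℕ) (M : Set (Fin n → K)) (k : ℕ) : Prop :=
  0 < k ∧ (∀ x ∈ M, TypeAtMost d M x k) ∧
    ∀ k', (∀ x ∈ M, TypeAtMost d M x k') → k ≤ k'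

/-- `μS` is the measure on the manifold `S ⊆ K^n` induced, via the isometric charts
of `S` (namely the coordinate projections `x ↦ x ∘ ι`), from the Haar measure `lamd` on
`K^d` normalized so that `O_K^d` has measure `1`. -/
def IsInducedMeasure [MeasurableSpace K] {n : ℕ} (d : ℕ) (S : Set (Fin n → K))
    (μS : Measure (Fin n → K)) (lamd : Measure (Fin d → K)) : Prop :=
  μS {x | x ∉ S} = 0 ∧
  ∀ x0 ∈ S, ∀ ι c F, IsChartAt d S x0 ι c F →
    ∀ A : Set (Fin n → K), MeasurableSet A → A ⊆ S ∩ {x | ∀ i, ‖x i - x0 i‖ ≤ ‖c‖} →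
      μS A = lamd ((fun x : Fin n → K => x ∘ ι) '' A)

/-! ### Maximal function and Riesz kernel on `K^n` -/

/-- The Hardy–Littlewood maximal function on `K^n`, where the balls are the sets
`a + b ⬝ O_K^n` with `b ≠ 0`. -/
noncomputable def maximalFn [MeasurableSpace K] {n : ℕ} (μ : Measure (Fin n → K))
    (f : (Fin n → K) → ℂ) (x : Fin n → K) : ℝ :=
  sSup {r : ℝ | ∃ (a : Fin n → K) (b : K), b ≠ 0 ∧ (∀ i, ‖x i - a i‖ ≤ ‖b‖) ∧
    r = (μ {y | ∀ i, ‖y i - a i‖ ≤ ‖b‖}).toReal⁻¹ *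
      ∫ y in {y : Fin n → K | ∀ i, ‖y i - a i‖ ≤ ‖b‖}, ‖f y‖ ∂μ}

/-- The kernel `y ↦ |y|^{-γ}` on `K^n`, extended by `0` at `0`. -/
noncomputable def rieszKernel {n : ℕ} (γ : ℝ) (y : Fin n → K) : ℂ :=
  if y = 0 then 0 else ((‖y‖ ^ (-γ) : ℝ) : ℂ)

end VdC

/-!
`f_{b,c}` has linear coefficient `f'(b)`, of norm `≥ 1`, while by the ultrametric inequality
its coefficient of degree `j + 1 ≥ 2` has norm at most `|c|^j ‖f - f(0)‖ ≤ |c| ‖f - f(0)‖`.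
So `f_{b,c}` is SP as soon as `|c| ‖f - f(0)‖ < 1`, which holds on `M_K^n` for the `n` with
`q^(n-1) ≤ ‖f - f(0)‖ < q^n`; this `n` bounds the SP-number.
-/

namespace VdC

variable {K : Type*} [NontriviallyNormedField K]

theorem pseval_zero (a : ℕ → K) : pseval a 0 = a 0 := by
  unfold pseval
  rw [tsum_eq_single 0 fun i hi => by simp [zero_pow hi]]
  simp

theorem pseval_dcoeff_zero (a : ℕ → K) : pseval (dcoeff a) 0 = a 1 := by
  simp [pseval_zero, dcoeff]

theorem shiftCoeff_one (a : ℕ → K) (b : K) {c : K} (hc : c ≠ 0) :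
    shiftCoeff a b c 1 = pseval (dcoeff a) b := by
  unfold shiftCoeff pseval
  rw [pow_one, inv_mul_cancel₀ hc, one_mul]
  exact tsum_congr fun m => by simp [dcoeff, mul_assoc]

theorem IsConvergent.tail {a : ℕ → K} (ha : IsConvergent a) : IsConvergent (tail a) := by
  refine ha.congr' (eventually_atTop.2 ⟨1, fun i hi => ?_⟩)
  simp [VdC.tail, Nat.one_le_iff_ne_zero.1 hi]

theorem norm_le_gaussNorm_tail {a : ℕ → K} (ha : IsConvergent a) {i : ℕ} (hi : i ≠ 0) :
    ‖a i‖ ≤ gaussNorm (tail a) := by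
  have h : ‖tail a i‖ ≤ gaussNorm (tail a) := le_ciSup ha.tail.bddAbove_range i
  rwa [tail, if_neg hi] at h

section Ultrametric

variable [IsUltrametricDist K] {a : ℕ → K} {M : ℝ}

theorem norm_shiftCoeff_succ_le (hM : ∀ i, i ≠ 0 → ‖a i‖ ≤ M) {b c : K} (hb : ‖b‖ ≤ 1)
    (hc : c ≠ 0) (k : ℕ) : ‖shiftCoeff a b c (k + 1)‖ ≤ ‖c‖ ^ k * M := by
  have hM0 : 0 ≤ M := (norm_nonneg _).trans (hM 1 one_ne_zero)
  have hsum : ‖∑' m : ℕ, ((m + (k + 1)).choose (k + 1) : K) * a (m + (k + 1)) * b ^ m‖ ≤ M := by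
    refine IsUltrametricDist.norm_tsum_le_of_forall_le_of_nonneg hM0 fun m => ?_
    rw [norm_mul, norm_mul, norm_pow]
    calc _ ≤ 1 * M * 1 := by
          gcongr
          · exact IsUltrametricDist.norm_natCast_le_one K _
          · exact hM _ (by omega)
          · exact pow_le_one₀ (norm_nonneg b) hb
      _ = M := by ring
  have hpow : ‖c‖⁻¹ * ‖c‖ ^ (k + 1) = ‖c‖ ^ k := by
    rw [pow_succ', inv_mul_cancel_left₀ (norm_ne_zero_iff.2 hc)]
  unfold shiftCoeff
  rw [norm_mul, norm_mul, norm_inv, norm_pow, hpow]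
  gcongr

theorem isSP_shiftCoeff (hM : ∀ i, i ≠ 0 → ‖a i‖ ≤ M) {b c : K} (hb : ‖b‖ ≤ 1) (hc : c ≠ 0)
    (hc1 : ‖c‖ ≤ 1) (hlin : ‖c‖ * M < ‖shiftCoeff a b c 1‖) : IsSP (shiftCoeff a b c) := by
  have hM0 : 0 ≤ M := (norm_nonneg _).trans (hM 1 one_ne_zero)
  refine ⟨norm_pos_iff.1 ((by positivity : 0 ≤ ‖c‖ * M).trans_lt hlin), fun j hj => ?_⟩
  obtain ⟨k, rfl⟩ : ∃ k, j = k + 1 := ⟨j - 1, by omega⟩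
  calc ‖shiftCoeff a b c (k + 1)‖ ≤ ‖c‖ ^ k * M := norm_shiftCoeff_succ_le hM hb hc k
    _ ≤ ‖c‖ ^ 1 * M :=
      mul_le_mul_of_nonneg_right (pow_le_pow_of_le_one (norm_nonneg c) hc1 (by omega)) hM0
    _ < ‖shiftCoeff a b c 1‖ := by rwa [pow_one]

theorem spAt_of_lt_pow {q n : ℕ} (hq : 1 ≤ q) (hM : ∀ i, i ≠ 0 → ‖a i‖ ≤ M)
    (hder : ∀ x : K, ‖x‖ ≤ 1 → 1 ≤ ‖pseval (dcoeff a) x‖) (hMn : M < (q : ℝ) ^ n) :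
    SPAt q a n := by
  intro b c hb hc hcn
  have hq' : (1 : ℝ) ≤ q := by exact_mod_cast hq
  have hM0 : 0 ≤ M := (norm_nonneg _).trans (hM 1 one_ne_zero)
  have hc1 : ‖c‖ ≤ 1 := hcn.trans (pow_le_one₀ (by positivity) (inv_le_one_of_one_le₀ hq'))
  rw [inv_pow] at hcn
  refine isSP_shiftCoeff hM hb hc hc1 ?_
  calc ‖c‖ * M ≤ ((q : ℝ) ^ n)⁻¹ * M := by gcongr
    _ < ((q : ℝ) ^ n)⁻¹ * (q : ℝ) ^ n := by gcongr
    _ = 1 := inv_mul_cancel₀ (by positivity)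
    _ ≤ ‖shiftCoeff a b c 1‖ := by rw [shiftCoeff_one a b hc]; exact hder b hb

end Ultrametric

end VdC

open VdC in
/-- Lemma 2.4.  Let `f = Σ aᵢ xⁱ ∈ K⦃x⦄` with `|f'(x)| ≥ 1` on `O_K`.
Then the SP-number of `f` is a finite integer `r` with `q^(r-1) ≤ ‖f - f(0)‖`, and for
all nonzero `c ∈ M_K^r` and all `b ∈ O_K` one has `|f_{b,c}|_SP ≥ 1`. -/
theorem statement0 {K : Type*} [NontriviallyNormedField K] (q : ℕ)
    (hK : IsLocalField K q) (a : ℕ → K) (ha : IsConvergent a)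
    (hder : ∀ x : K, ‖x‖ ≤ 1 → 1 ≤ ‖pseval (dcoeff a) x‖) :
    ∃ r : ℕ, IsLeast {r' : ℕ | SPAt q a r'} r ∧
      (q : ℝ) ^ ((r : ℤ) - 1) ≤ gaussNorm (tail a) ∧
      ∀ c : K, c ≠ 0 → ‖c‖ ≤ (q : ℝ)⁻¹ ^ r → ∀ b : K, ‖b‖ ≤ 1 →
        IsSP (shiftCoeff a b c) ∧ 1 ≤ ‖shiftCoeff a b c 1‖ := by
  have := IsUltrametricDist.isUltrametricDist_of_isNonarchimedean_norm hK.nonarch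
  have hq : (1 : ℝ) < q := by exact_mod_cast hK.one_lt
  have hM : ∀ i, i ≠ 0 → ‖a i‖ ≤ gaussNorm (tail a) := fun i hi => norm_le_gaussNorm_tail ha hi
  have h1M : 1 ≤ gaussNorm (tail a) :=
    (pseval_dcoeff_zero a ▸ hder 0 (by simp)).trans (hM 1 one_ne_zero)
  obtain ⟨n, hnM, hMn⟩ := exists_nat_pow_near h1M hq
  have hSP : SPAt q a (n + 1) := spAt_of_lt_pow hK.one_lt.le hM hder hMn
  obtain ⟨r, hr⟩ : ∃ r, IsLeast {r' : ℕ | SPAt q a r'} r := ⟨_, Nat.isLeast_find ⟨_, hSP⟩⟩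
  refine ⟨r, hr, ?_, fun c hc hcr b hb => ⟨hr.1 b c hb hc hcr, ?_⟩⟩
  · have hrn : (r : ℤ) - 1 ≤ n := by have := hr.2 hSP; omega
    calc (q : ℝ) ^ ((r : ℤ) - 1) ≤ (q : ℝ) ^ (n : ℤ) := zpow_le_zpow_right₀ hq.le hrn
      _ ≤ gaussNorm (tail a) := by rwa [zpow_natCast]
  · rw [shiftCoeff_one a b hc]
    exact hder b hb
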